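/- Let ψ be the Magnus expansion on the free group F on a₁,…,a_k, and let c ∈ F be any conjugate of a_j (i.e. c = g a_j g⁻¹ for some g ∈ F). Then for X = [c, a_j][c, a_j⁻¹], every non-constant monomial of ψ(X) has degree at least 2 and contains the variable x_j at least twice. -/

import Mathlib

/-- The ring of formal power series over `ℤ` in `k` non-commuting variables,
realized as coefficient functions on words (monomials) in the alphabet `Fin k`. -/
def NCPS (k : ℕ) : Type := List (Fin k) → ℤ

namespace NCPS

variable {k : ℕ}

instance instAddCommGroup : AddCommGroup (NCPS k) := Pi.addCommGroup

@[simp] theorem add_apply (f g : NCPS k) (w : List (Fin k)) : (f + g) w = f w + g w := rfl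
@[simp] theorem zero_apply (w : List (Fin k)) : (0 : NCPS k) w = 0 := rfl
@[simp] theorem neg_apply (f : NCPS k) (w : List (Fin k)) : (-f) w = - f w := rfl

/-- Multiplication: convolution over all splittings of a word. -/
protected def mul (f g : NCPS k) : NCPS k :=
  fun w => ∑ n ∈ Finset.range (w.length + 1), f (w.take n) * g (w.drop n)

/-- The unit series. -/
protected def one : NCPS k := fun w => if w = [] then 1 else 0

protected theorem one_mul (f : NCPS k) : NCPS.one.mul f = f := by
  funext w
  show (∑ n ∈ Finset.range (w.length + 1),
      (if w.take n = [] then (1:ℤ) else 0) * f (w.drop n)) = f w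
  rw [Finset.sum_eq_single 0]
  · simp
  · intro n hn h0
    have hn' : n < w.length + 1 := Finset.mem_range.mp hn
    have hlen : (w.take n).length ≠ 0 := by
      rw [List.length_take]; omega
    have : ¬ (w.take n = []) := fun e => hlen (by rw [e]; rfl)
    simp [this]
  · intro h; exact absurd (Finset.mem_range.mpr (Nat.succ_pos _)) h

protected theorem mul_one (f : NCPS k) : f.mul NCPS.one = f := by
  funext w
  show (∑ n ∈ Finset.range (w.length + 1),
      f (w.take n) * (if w.drop n = [] then (1:ℤ) else 0)) = f w
  rw [Finset.sum_eq_single w.length]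
  · simp
  · intro n hn h0
    have hn' : n ≤ w.length := Nat.lt_succ_iff.mp (Finset.mem_range.mp hn)
    have : ¬ (w.drop n = []) := by
      rw [List.drop_eq_nil_iff]
      intro h; exact h0 (le_antisymm hn' h)
    simp [this]
  · intro h; exact absurd (Finset.mem_range.mpr (Nat.lt_succ_self _)) h

protected theorem mul_assoc (f g h : NCPS k) : (f.mul g).mul h = f.mul (g.mul h) := by
  funext w
  show (∑ b ∈ Finset.range (w.length + 1),
      (∑ a ∈ Finset.range ((w.take b).length + 1), f ((w.take b).take a) * g ((w.take b).drop a))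
        * h (w.drop b))
    = ∑ a ∈ Finset.range (w.length + 1),
        f (w.take a) * ∑ c ∈ Finset.range ((w.drop a).length + 1),
          g ((w.drop a).take c) * h ((w.drop a).drop c)
  have L : ∀ b ∈ Finset.range (w.length + 1),
      (∑ a ∈ Finset.range ((w.take b).length + 1), f ((w.take b).take a) * g ((w.take b).drop a))
        * h (w.drop b)
      = ∑ a ∈ Finset.range (b + 1), f (w.take a) * g ((w.drop a).take (b - a)) * h (w.drop b) := by
    intro b hb
    have hb' : b ≤ w.length := Nat.lt_succ_iff.mp (Finset.mem_range.mp hb)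
    rw [Finset.sum_mul, List.length_take, min_eq_left hb']
    refine Finset.sum_congr rfl fun a ha => ?_
    have ha' : a ≤ b := Nat.lt_succ_iff.mp (Finset.mem_range.mp ha)
    rw [List.take_take, min_eq_left ha', List.drop_take]
  have R : ∀ a ∈ Finset.range (w.length + 1),
      f (w.take a) * ∑ c ∈ Finset.range ((w.drop a).length + 1),
        g ((w.drop a).take c) * h ((w.drop a).drop c)
      = ∑ c ∈ Finset.range (w.length - a + 1),
          f (w.take a) * g ((w.drop a).take c) * h (w.drop (a + c)) := by
    intro a ha
    rw [Finset.mul_sum, List.length_drop]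
    refine Finset.sum_congr rfl fun c hc => ?_
    rw [List.drop_drop, mul_assoc]
  rw [Finset.sum_congr rfl L, Finset.sum_congr rfl R]
  rw [Finset.sum_sigma', Finset.sum_sigma']
  refine Finset.sum_bij' (fun x _ => (⟨x.2, x.1 - x.2⟩ : Σ _ : ℕ, ℕ))
    (fun y _ => (⟨y.1 + y.2, y.1⟩ : Σ _ : ℕ, ℕ)) ?_ ?_ ?_ ?_ ?_
  · intro x hx
    simp only [Finset.mem_sigma, Finset.mem_range] at hx ⊢
    omega
  · intro y hy
    simp only [Finset.mem_sigma, Finset.mem_range] at hy ⊢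
    omega
  · intro x hx
    simp only [Finset.mem_sigma, Finset.mem_range] at hx
    ext <;> simp <;> omega
  · intro y hy
    simp only [Finset.mem_sigma, Finset.mem_range] at hy
    ext <;> simp <;> omega
  · intro x hx
    simp only [Finset.mem_sigma, Finset.mem_range] at hx
    have : x.2 + (x.1 - x.2) = x.1 := by omega
    simp [this]

protected theorem left_distrib (f g h : NCPS k) : f.mul (g + h) = f.mul g + f.mul h := by
  funext w
  show (∑ n ∈ Finset.range (w.length + 1), f (w.take n) * ((g + h) (w.drop n)))
    = (∑ n ∈ Finset.range (w.length + 1), f (w.take n) * g (w.drop n))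
      + ∑ n ∈ Finset.range (w.length + 1), f (w.take n) * h (w.drop n)
  rw [← Finset.sum_add_distrib]
  refine Finset.sum_congr rfl fun n _ => ?_
  show f (w.take n) * (g (w.drop n) + h (w.drop n)) = _
  ring

protected theorem right_distrib (f g h : NCPS k) : (f + g).mul h = f.mul h + g.mul h := by
  funext w
  show (∑ n ∈ Finset.range (w.length + 1), ((f + g) (w.take n)) * h (w.drop n))
    = (∑ n ∈ Finset.range (w.length + 1), f (w.take n) * h (w.drop n))
      + ∑ n ∈ Finset.range (w.length + 1), g (w.take n) * h (w.drop n)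
  rw [← Finset.sum_add_distrib]
  refine Finset.sum_congr rfl fun n _ => ?_
  show (f (w.take n) + g (w.take n)) * h (w.drop n) = _
  ring

protected theorem zero_mul (f : NCPS k) : (0 : NCPS k).mul f = 0 := by
  funext w
  show (∑ n ∈ Finset.range (w.length + 1), (0:ℤ) * f (w.drop n)) = 0
  simp

protected theorem mul_zero (f : NCPS k) : f.mul (0 : NCPS k) = 0 := by
  funext w
  show (∑ n ∈ Finset.range (w.length + 1), f (w.take n) * (0:ℤ)) = 0
  simp

instance instRing : Ring (NCPS k) :=
  { instAddCommGroup with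
    mul := NCPS.mul
    one := NCPS.one
    mul_assoc := NCPS.mul_assoc
    one_mul := NCPS.one_mul
    mul_one := NCPS.mul_one
    left_distrib := NCPS.left_distrib
    right_distrib := NCPS.right_distrib
    zero_mul := NCPS.zero_mul
    mul_zero := NCPS.mul_zero }

@[simp] theorem mul_apply (f g : NCPS k) (w : List (Fin k)) :
    (f * g) w = ∑ n ∈ Finset.range (w.length + 1), f (w.take n) * g (w.drop n) := rfl

@[simp] theorem one_apply (w : List (Fin k)) : (1 : NCPS k) w = if w = [] then 1 else 0 := rfl

/-- The variable `x_i`, as a power series. -/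
def X (i : Fin k) : NCPS k := fun w => if w = [i] then 1 else 0

/-- The geometric series `1 - x_i + x_i² - x_i³ + ⋯`, inverse of `1 + x_i`. -/
def geom (i : Fin k) : NCPS k :=
  fun w => if w = List.replicate w.length i then (-1) ^ w.length else 0

theorem one_add_X_apply_of_two_le (i : Fin k) (u : List (Fin k)) (h : 2 ≤ u.length) :
    (1 + X i) u = 0 := by
  have h1 : u ≠ [] := by intro e; rw [e] at h; simp at h
  have h2 : u ≠ [i] := by intro e; rw [e] at h; simp at h
  simp [X, h1, h2]

theorem one_add_X_mul_geom (i : Fin k) : (1 + X i) * geom i = 1 := by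
  funext w
  rw [mul_apply]
  cases w with
  | nil => simp [X, geom]
  | cons j t =>
    have hlen : (j :: t).length + 1 = t.length + 1 + 1 := rfl
    rw [hlen, Finset.sum_range_succ', Finset.sum_range_succ']
    have hrest : ∀ m ∈ Finset.range t.length,
        (1 + X i) ((j :: t).take (m + 1 + 1)) * geom i ((j :: t).drop (m + 1 + 1)) = 0 := by
      intro m hm
      have hm' : m < t.length := Finset.mem_range.mp hm
      have h2 : 2 ≤ ((j :: t).take (m + 1 + 1)).length := by
        rw [List.length_take]; simp; omega
      rw [one_add_X_apply_of_two_le i _ h2, zero_mul]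
    rw [Finset.sum_eq_zero hrest, zero_add]
    have e0 : (1 + X i) ((j :: t).take 0) = 1 := by simp [X]
    have e1 : (1 + X i) ((j :: t).take 1) = if j = i then (1:ℤ) else 0 := by
      by_cases hj : j = i <;> simp [X, hj]
    rw [e0, e1, one_mul]
    simp only [List.drop_succ_cons, List.drop_zero]
    have hgc : geom i (j :: t) =
        if j = i ∧ t = List.replicate t.length i then (-1 : ℤ) ^ (t.length + 1) else 0 := by
      simp only [geom, List.length_cons, List.replicate_succ, List.cons.injEq]
    have hone : (1 : NCPS k) (j :: t) = 0 := by simp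
    rw [hone, hgc]
    by_cases hj : j = i
    · by_cases ht : t = List.replicate t.length i
      · rw [if_pos hj, one_mul, if_pos (And.intro hj ht)]
        have hgt : geom i t = (-1 : ℤ) ^ t.length := by
          simp only [geom]; rw [if_pos ht]
        rw [hgt, pow_succ]; ring
      · rw [if_pos hj, one_mul, if_neg (fun h => ht h.2)]
        have hgt : geom i t = 0 := by simp only [geom]; rw [if_neg ht]
        rw [hgt]; ring
    · rw [if_neg hj, if_neg (fun h => hj h.1), zero_mul]; ring

theorem geom_mul_one_add_X (i : Fin k) : geom i * (1 + X i) = 1 := by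
  funext w
  rw [mul_apply]
  induction w using List.reverseRecOn with
  | nil => simp [X, geom]
  | append_singleton t j _ =>
    have hlen : (t ++ [j]).length = t.length + 1 := by simp
    rw [hlen, Finset.sum_range_succ, Finset.sum_range_succ]
    have hrest : ∀ m ∈ Finset.range t.length,
        geom i ((t ++ [j]).take m) * (1 + X i) ((t ++ [j]).drop m) = 0 := by
      intro m hm
      have hm' : m < t.length := Finset.mem_range.mp hm
      have h2 : 2 ≤ ((t ++ [j]).drop m).length := by
        rw [List.length_drop, hlen]; omega
      rw [one_add_X_apply_of_two_le i _ h2, mul_zero]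
    rw [Finset.sum_eq_zero hrest, zero_add]
    have e1 : (t ++ [j]).take t.length = t := List.take_left
    have e2 : (t ++ [j]).drop t.length = [j] := List.drop_left
    have e3 : (t ++ [j]).take (t.length + 1) = t ++ [j] := by
      rw [List.take_of_length_le (by simp)]
    have e4 : (t ++ [j]).drop (t.length + 1) = [] := by
      rw [List.drop_of_length_le (by simp)]
    have eX : (1 + X i) [j] = if j = i then (1:ℤ) else 0 := by
      by_cases hj : j = i <;> simp [X, hj]
    have eE : (1 + X i) ([] : List (Fin k)) = 1 := by simp [X]
    rw [e1, e2, e3, e4, eX, eE, mul_one]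
    have hgc : geom i (t ++ [j]) =
        if j = i ∧ t = List.replicate t.length i then (-1 : ℤ) ^ (t.length + 1) else 0 := by
      have key : (t ++ [j] = List.replicate (t.length + 1) i) ↔
          (j = i ∧ t = List.replicate t.length i) := by
        rw [List.replicate_succ']
        constructor
        · intro h
          rcases List.append_inj h (by simp) with ⟨h1, h2⟩
          exact ⟨by simpa using h2, h1⟩
        · rintro ⟨h1, h2⟩
          rw [h1, ← h2]
      simp only [geom, hlen]
      exact if_congr key rfl rfl
    have hone : (1 : NCPS k) (t ++ [j]) = 0 := by simp
    rw [hone, hgc]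
    by_cases hj : j = i
    · by_cases ht : t = List.replicate t.length i
      · rw [if_pos hj, mul_one, if_pos (And.intro hj ht)]
        have hgt : geom i t = (-1 : ℤ) ^ t.length := by
          simp only [geom]; rw [if_pos ht]
        rw [hgt, pow_succ]; ring
      · rw [if_pos hj, mul_one, if_neg (fun h => ht h.2)]
        have hgt : geom i t = 0 := by simp only [geom]; rw [if_neg ht]
        rw [hgt]; ring
    · rw [if_neg hj, if_neg (fun h => hj h.1), mul_zero]; ring

/-- `1 + x_i` as a unit of the power series ring. -/
def XU (i : Fin k) : (NCPS k)ˣ :=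
  ⟨1 + X i, geom i, one_add_X_mul_geom i, geom_mul_one_add_X i⟩

/-- The Magnus expansion: the homomorphism from the free group on `k` generators
to the group of units of `NCPS k`, sending the `i`-th generator to `1 + x_i`. -/
def psi : FreeGroup (Fin k) →* (NCPS k)ˣ := FreeGroup.lift XU

/-- The alternating series `w̄ = Σ_{i ≥ 1} (-1)^i w^i` (whose coefficients are given by
finite sums, as is valid when `w` has zero constant term). -/
def bar (f : NCPS k) : NCPS k :=
  fun w => ∑ i ∈ Finset.Icc 1 w.length, (-1) ^ i * (f ^ i) w

end NCPS

/-!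
For each `m`, the units `u` such that every monomial of `u - 1` contains `x_j` at least `m`
times form a normal subgroup of the units, and the commutator of elements of levels `m` and `n`
has level `m + n`. Since `ψ(a_j) = 1 + x_j` has level `1`, so do its conjugate `ψ(c)` and
its inverse, hence both commutators `[ψ(c), ψ(a_j)^{±1}]` and their product have level `2`.
-/

open scoped commutatorElement

namespace NCPS

variable {k : ℕ}

def countFiltration (j : Fin k) (m : ℕ) : AddSubgroup (NCPS k) where
  carrier := {f | ∀ w : List (Fin k), w.count j < m → f w = 0}
  zero_mem' _ _ := rfl
  add_mem' hf hg w hw := by simp only [add_apply, hf w hw, hg w hw, add_zero]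
  neg_mem' hf w hw := by simp only [neg_apply, hf w hw, neg_zero]

theorem mem_countFiltration_zero (j : Fin k) (f : NCPS k) : f ∈ countFiltration j 0 :=
  fun _ h => absurd h (Nat.not_lt_zero _)

theorem mul_mem_countFiltration {j : Fin k} {m n : ℕ} {f g : NCPS k}
    (hf : f ∈ countFiltration j m) (hg : g ∈ countFiltration j n) :
    f * g ∈ countFiltration j (m + n) := by
  intro w hw
  rw [mul_apply]
  refine Finset.sum_eq_zero fun i _ => ?_
  have hcount : (w.take i).count j + (w.drop i).count j = w.count j := by
    rw [← List.count_append, List.take_append_drop]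
  by_cases hi : (w.take i).count j < m
  · rw [hf _ hi, zero_mul]
  · rw [hg _ (by omega), mul_zero]

theorem X_mem_countFiltration (j : Fin k) : X j ∈ countFiltration j 1 := by
  intro w hw
  refine if_neg fun hwj => ?_
  simp [hwj] at hw

def unitFiltration (j : Fin k) (m : ℕ) : Subgroup (NCPS k)ˣ where
  carrier := {u | (u : NCPS k) - 1 ∈ countFiltration j m}
  one_mem' := by
    show ((1 : (NCPS k)ˣ) : NCPS k) - 1 ∈ countFiltration j m
    rw [Units.val_one, sub_self]
    exact zero_mem _
  mul_mem' {a b} ha hb := by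
    have key : ((a * b : (NCPS k)ˣ) : NCPS k) - 1
        = ((a : NCPS k) - 1) * b + ((b : NCPS k) - 1) := by
      rw [Units.val_mul]; noncomm_ring
    show _ ∈ countFiltration j m
    rw [key]
    exact add_mem (mul_mem_countFiltration ha (mem_countFiltration_zero j _)) hb
  inv_mem' {a} ha := by
    have key : ((a⁻¹ : (NCPS k)ˣ) : NCPS k) - 1 = -(((a⁻¹ : (NCPS k)ˣ) : NCPS k) * (a - 1)) := by
      rw [mul_sub, Units.inv_mul, mul_one, neg_sub]
    show _ ∈ countFiltration j m
    rw [key]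
    simpa using neg_mem (mul_mem_countFiltration (mem_countFiltration_zero j _) ha)

theorem mem_unitFiltration {j : Fin k} {m : ℕ} {u : (NCPS k)ˣ} :
    u ∈ unitFiltration j m ↔ (u : NCPS k) - 1 ∈ countFiltration j m :=
  Iff.rfl

instance unitFiltration_normal (j : Fin k) (m : ℕ) : (unitFiltration j m).Normal where
  conj_mem a ha g := by
    have key : ((g * a * g⁻¹ : (NCPS k)ˣ) : NCPS k) - 1 = g * ((a : NCPS k) - 1) * ↑g⁻¹ := by
      rw [Units.val_mul, Units.val_mul, mul_sub, sub_mul, mul_one, Units.mul_inv]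
    rw [mem_unitFiltration, key]
    simpa using mul_mem_countFiltration
      (mul_mem_countFiltration (mem_countFiltration_zero j _) ha) (mem_countFiltration_zero j _)

theorem commutatorElement_mem_unitFiltration {j : Fin k} {m n : ℕ} {a b : (NCPS k)ˣ}
    (ha : a ∈ unitFiltration j m) (hb : b ∈ unitFiltration j n) :
    ⁅a, b⁆ ∈ unitFiltration j (m + n) := by
  rw [mem_unitFiltration] at ha hb ⊢
  -- the levels add because `a * b - b * a = (a - 1) * (b - 1) - (b - 1) * (a - 1)`
  have key : ((⁅a, b⁆ : (NCPS k)ˣ) : NCPS k) - 1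
      = (((a : NCPS k) - 1) * (b - 1) - (b - 1) * (a - 1)) * ↑a⁻¹ * ↑b⁻¹ := by
    have hab : (a : NCPS k) * b * ↑a⁻¹ * ↑b⁻¹ - b * (a * ↑a⁻¹) * ↑b⁻¹
        = (((a : NCPS k) - 1) * (b - 1) - (b - 1) * (a - 1)) * ↑a⁻¹ * ↑b⁻¹ := by
      noncomm_ring
    rw [commutatorElement_def, Units.val_mul, Units.val_mul, Units.val_mul, ← hab,
      Units.mul_inv, mul_one, Units.mul_inv]
  rw [key]
  have hcomm : ((a : NCPS k) - 1) * (b - 1) - (b - 1) * (a - 1) ∈ countFiltration j (m + n) :=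
    sub_mem (mul_mem_countFiltration ha hb) (add_comm n m ▸ mul_mem_countFiltration hb ha)
  simpa using mul_mem_countFiltration
    (mul_mem_countFiltration hcomm (mem_countFiltration_zero j _)) (mem_countFiltration_zero j _)

theorem psi_of_mem_unitFiltration (j : Fin k) : psi (FreeGroup.of j) ∈ unitFiltration j 1 := by
  rw [mem_unitFiltration, psi, FreeGroup.lift_apply_of]
  simpa [XU] using X_mem_countFiltration j

end NCPS

/-- Let `c = g a_j g⁻¹` be a conjugate of `a_j` and
`X = [c, a_j][c, a_j⁻¹]` (with `[x, y] = x y x⁻¹ y⁻¹`). Then every non-constant monomial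
of `ψ(X)` has degree at least `2` and contains the variable `x_j` at least twice: the
coefficient of `ψ(X) - 1` vanishes on any word of length `< 2` or containing `j` fewer
than `2` times. -/
theorem stmt10 {k : ℕ} (j : Fin k) (g : FreeGroup (Fin k)) (w : List (Fin k))
    (hw : w.length < 2 ∨ w.count j < 2) :
    ((NCPS.psi (((g * FreeGroup.of j * g⁻¹) * FreeGroup.of j * (g * FreeGroup.of j * g⁻¹)⁻¹
          * (FreeGroup.of j)⁻¹)
        * ((g * FreeGroup.of j * g⁻¹) * (FreeGroup.of j)⁻¹ * (g * FreeGroup.of j * g⁻¹)⁻¹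
          * FreeGroup.of j)) : NCPS k) - 1) w = 0 := by
  set a := FreeGroup.of j
  set c := g * a * g⁻¹
  have ha : NCPS.psi a ∈ NCPS.unitFiltration j 1 := NCPS.psi_of_mem_unitFiltration j
  have hc : NCPS.psi c ∈ NCPS.unitFiltration j 1 := by
    simpa only [c, map_mul, map_inv] using
      (NCPS.unitFiltration_normal j 1).conj_mem _ ha (NCPS.psi g)
  have hX : c * a * c⁻¹ * a⁻¹ * (c * a⁻¹ * c⁻¹ * a) = ⁅c, a⁆ * ⁅c, a⁻¹⁆ := by
    rw [commutatorElement_def, commutatorElement_def, inv_inv]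
  have hpsiX : NCPS.psi (⁅c, a⁆ * ⁅c, a⁻¹⁆) ∈ NCPS.unitFiltration j 2 := by
    rw [map_mul, map_commutatorElement, map_commutatorElement, map_inv]
    exact mul_mem (NCPS.commutatorElement_mem_unitFiltration hc ha)
      (NCPS.commutatorElement_mem_unitFiltration hc (inv_mem ha))
  rw [hX]
  exact hpsiX w (hw.elim (lt_of_le_of_lt List.count_le_length) id)
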